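/- Let P be a plain metric logic program over alphabet 𝒜 and λ ∈ ℕ. If ⟨t,t⟩ is a constraint equilibrium model of Π_λ(P) ∪ Δ^c_λ ∪ Ψ^c_λ(P), then ⟨t,t⟩ is timed wrt λ and σ^c(⟨t,t⟩) is a metric equilibrium model of P. -/

import Mathlib

/-!
If valuations `h` and `t` encode the timed traces `(H, τ)` and `(T, τ)`, then `⟨h, t⟩` satisfies
the constraints that `Π_λ(P) ∪ Ψ^c_λ(P)` attaches to a rule at time point `k` exactly when the
metric trace satisfies that rule at `k`: the `Ψ^c` constraints are what keeps the gap
`τ(k+1) - τ(k)` inside the interval of a next-rule. The constraints `Δ^c_λ` force the values of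
the `t_k` to form a timing function, so `⟨t, t⟩` encodes a total metric model of `P`. A smaller
metric model `(H, T)` would be encoded by `θ^c`, a valuation strictly below `t` that still
satisfies the whole theory, contradicting equilibrium.
-/

namespace MetricASP

/-- Metric intervals `[m..n)` with `n = none` standing for `ω`. -/
structure Interval : Type where
  m : ℕ
  n : Option ℕ

/-- `x ∈ [m..n)` iff `m ≤ x` and (`n = ω` or `x < n`). -/
def Interval.mem (I : Interval) (x : ℕ) : Prop :=
  I.m ≤ x ∧ ∀ nn ∈ I.n, x < nn

/-- The interval `[0..ω)`. -/
def fullInterval : Interval := ⟨0, none⟩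

/-- Metric formulas over an alphabet `α`. -/
inductive MF (α : Type) : Type
  | fls
  | atom (a : α)
  | conj (φ ψ : MF α)
  | disj (φ ψ : MF α)
  | impl (φ ψ : MF α)
  | init
  | next (I : Interval) (φ : MF α)
  | always (I : Interval) (φ : MF α)
  | evt (I : Interval) (φ : MF α)

def MF.neg {α : Type} (φ : MF α) : MF α := .impl φ .fls
def MF.top {α : Type} : MF α := MF.neg .fls
def MF.fin {α : Type} : MF α := MF.neg (.next fullInterval MF.top)

/-- Timing function wrt `lam`. -/
def IsTiming (lam : ℕ) (τ : ℕ → ℕ) : Prop :=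
  τ 0 = 0 ∧ ∀ k, k + 1 < lam → τ k < τ (k + 1)

/-- `H i ⊆ T i` for all relevant indices. -/
def IsTrace {α : Type} (lam : ℕ) (H T : ℕ → Set α) : Prop :=
  ∀ i, i < lam → H i ⊆ T i

/-- Satisfaction of a metric formula by a timed HT-trace of length `lam`. -/
def MSat {α : Type} (lam : ℕ) (τ : ℕ → ℕ) :
    (ℕ → Set α) → (ℕ → Set α) → ℕ → MF α → Prop
  | _, _, _, .fls => False
  | H, _, k, .atom a => a ∈ H k
  | H, T, k, .conj φ ψ => MSat lam τ H T k φ ∧ MSat lam τ H T k ψ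
  | H, T, k, .disj φ ψ => MSat lam τ H T k φ ∨ MSat lam τ H T k ψ
  | H, T, k, .impl φ ψ =>
      (MSat lam τ H T k φ → MSat lam τ H T k ψ) ∧
      (MSat lam τ T T k φ → MSat lam τ T T k ψ)
  | _, _, k, .init => k = 0
  | H, T, k, .next I φ =>
      k + 1 < lam ∧ MSat lam τ H T (k + 1) φ ∧ I.mem (τ (k + 1) - τ k)
  | H, T, k, .evt I φ =>
      ∃ i, k ≤ i ∧ i < lam ∧ I.mem (τ i - τ k) ∧ MSat lam τ H T i φ
  | H, T, k, .always I φ =>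
      ∀ i, k ≤ i → i < lam → I.mem (τ i - τ k) → MSat lam τ H T i φ

/-- MHT-model of a set of metric formulas. -/
def MHTModels {α : Type} (lam : ℕ) (τ : ℕ → ℕ) (H T : ℕ → Set α)
    (Γ : Set (MF α)) : Prop :=
  ∀ φ ∈ Γ, MSat lam τ H T 0 φ

/-- Metric equilibrium model (of the total trace given by `T` and `τ`). -/
def MetricEqModel {α : Type} (lam : ℕ) (τ : ℕ → ℕ) (T : ℕ → Set α)
    (Γ : Set (MF α)) : Prop :=
  MHTModels lam τ T T Γ ∧
  ∀ H : ℕ → Set α, IsTrace lam H T → (∃ i, i < lam ∧ H i ≠ T i) →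
    ¬ MHTModels lam τ H T Γ

/-- Propositional formulas over atoms `β`. -/
inductive PF (β : Type) : Type
  | fls
  | atom (a : β)
  | and (φ ψ : PF β)
  | or (φ ψ : PF β)
  | imp (φ ψ : PF β)

def PF.neg {β : Type} (φ : PF β) : PF β := .imp φ .fls
def PF.top {β : Type} : PF β := PF.neg .fls

def bigOr {β : Type} (l : List (PF β)) : PF β := l.foldr .or .fls
def bigAnd {β : Type} (l : List (PF β)) : PF β := l.foldr .and PF.top

/-- Here-and-there satisfaction. -/
def HSat {β : Type} : Set β → Set β → PF β → Prop
  | _, _, .fls => False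
  | H, _, .atom a => a ∈ H
  | H, T, .and φ ψ => HSat H T φ ∧ HSat H T ψ
  | H, T, .or φ ψ => HSat H T φ ∨ HSat H T ψ
  | H, T, .imp φ ψ => (HSat H T φ → HSat H T ψ) ∧ (HSat T T φ → HSat T T ψ)

def HTModels {β : Type} (H T : Set β) (Γ : Set (PF β)) : Prop :=
  ∀ φ ∈ Γ, HSat H T φ

/-- `T` (as the total interpretation `⟨T,T⟩`) is an equilibrium model of `Γ`. -/
def EqModel {β : Type} (T : Set β) (Γ : Set (PF β)) : Prop :=
  HTModels T T Γ ∧ ∀ H : Set β, H ⊂ T → ¬ HTModels H T Γ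

/-- Literals over atoms `β`. -/
inductive Lit (β : Type) : Type
  | pos (a : β)
  | neg (a : β)

/-- Body atoms: atoms of the alphabet, `𝗜`, or `𝗙`. -/
inductive BAt (α : Type) : Type
  | atm (a : α)
  | init
  | fin

/-- A plain metric rule: `□(α ← β)` or `□(◯_I a ← β)`. -/
inductive PlainRule (α : Type) : Type
  | basic (head : List (Lit α)) (body : List (Lit (BAt α)))
  | nxt (I : Interval) (a : α) (body : List (Lit (BAt α)))

def litMF {α β : Type} (f : β → MF α) : Lit β → MF α
  | .pos a => f a
  | .neg a => MF.neg (f a)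

def BAt.mf {α : Type} : BAt α → MF α
  | .atm a => .atom a
  | .init => .init
  | .fin => MF.fin

def headMF {α : Type} (l : List (Lit α)) : MF α :=
  (l.map (litMF MF.atom)).foldr .disj .fls

def bodyMF {α : Type} (l : List (Lit (BAt α))) : MF α :=
  (l.map (litMF BAt.mf)).foldr .conj MF.top

/-- The metric formula corresponding to a plain metric rule. -/
def PlainRule.mf {α : Type} : PlainRule α → MF α
  | .basic h b => .always fullInterval (.impl (bodyMF b) (headMF h))
  | .nxt I a b => .always fullInterval (.impl (bodyMF b) (.next I (.atom a)))

/-- Domain values: the Boolean truth value `𝐭` and the natural numbers. -/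
inductive DVal : Type
  | tt
  | num (n : ℕ)

/-- Valuations: partial functions from variables to domain values. -/
def Valu (χ : Type) : Type := χ → Option DVal

/-- Graph inclusion of valuations. -/
def Valu.le {χ : Type} (v w : Valu χ) : Prop :=
  ∀ x d, v x = some d → w x = some d

/-- HTc satisfaction of constraint formulas, for a given denotation of atoms. -/
def CSat {χ κ : Type} (den : κ → Valu χ → Prop) :
    Valu χ → Valu χ → PF κ → Prop
  | _, _, .fls => False
  | h, _, .atom c => den c h
  | h, t, .and φ ψ => CSat den h t φ ∧ CSat den h t ψ
  | h, t, .or φ ψ => CSat den h t φ ∨ CSat den h t ψ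
  | h, t, .imp φ ψ =>
      (CSat den h t φ → CSat den h t ψ) ∧ (CSat den t t φ → CSat den t t ψ)

def CModels {χ κ : Type} (den : κ → Valu χ → Prop) (h t : Valu χ)
    (Γ : Set (PF κ)) : Prop :=
  ∀ φ ∈ Γ, CSat den h t φ

/-- `t` (as the total HTc-interpretation `⟨t,t⟩`) is a constraint equilibrium model. -/
def CEqModel {χ κ : Type} (den : κ → Valu χ → Prop) (t : Valu χ)
    (Γ : Set (PF κ)) : Prop :=
  CModels den t t Γ ∧
  ∀ h : Valu χ, Valu.le h t → h ≠ t → ¬ CModels den h t Γ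

/-- Variables of the HTc signature for the plain translation: `a_k` and `t_k`. -/
inductive CV (α : Type) : Type
  | av (a : α) (k : ℕ)
  | tv (k : ℕ)

/-- Constraint atoms: `a_k = 𝐭`, `t_k = d`, and `t_k − t_j ≤ d`. -/
inductive CAt (α : Type) : Type
  | bool (a : α) (k : ℕ)
  | eqN (k d : ℕ)
  | diff (k j : ℕ) (d : ℤ)

/-- Denotation of constraint atoms. -/
def CAt.den {α : Type} : CAt α → Valu (CV α) → Prop
  | .bool a k, v => v (.av a k) = some .tt
  | .eqN k d, v => v (.tv k) = some (.num d)
  | .diff k j d, v => ∃ x y : ℕ,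
      v (.tv k) = some (.num x) ∧ v (.tv j) = some (.num y) ∧ (x : ℤ) - (y : ℤ) ≤ d

def csigLit {β α : Type} (f : β → PF (CAt α)) : Lit β → PF (CAt α)
  | .pos a => f a
  | .neg a => PF.neg (f a)

def csigBAt {α : Type} (lam k : ℕ) : BAt α → PF (CAt α)
  | .atm a => .atom (.bool a k)
  | .init => if k = 0 then PF.top else .fls
  | .fin => if k = lam - 1 then PF.top else .fls

def csigBody {α : Type} (lam k : ℕ) (b : List (Lit (BAt α))) : PF (CAt α) :=
  (b.map (csigLit (csigBAt lam k))).foldr .and PF.top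

def csigHead {α : Type} (k : ℕ) (h : List (Lit α)) : PF (CAt α) :=
  (h.map (csigLit (fun a => PF.atom (CAt.bool a k)))).foldr .or .fls

/-- The translation `σ_k` of a plain metric rule, in the constraint language. -/
def csigRule {α : Type} (lam k : ℕ) : PlainRule α → PF (CAt α)
  | .basic h b => .imp (csigBody lam k b) (csigHead k h)
  | .nxt _ a b => .imp (csigBody lam k b)
      (if k = lam - 1 then .fls else .atom (.bool a (k + 1)))

/-- `Π_λ(P)` in the constraint language. -/
def cPiTheory {α : Type} (lam : ℕ) (P : Set (PlainRule α)) : Set (PF (CAt α)) :=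
  {φ | ∃ r ∈ P, ∃ k, k < lam ∧ φ = csigRule lam k r}

/-- `Δ^c_λ`. -/
def deltaC (α : Type) (lam : ℕ) : Set (PF (CAt α)) :=
  insert (PF.atom (CAt.eqN 0 0))
    {φ | ∃ k, k + 1 < lam ∧ φ = PF.atom (CAt.diff k (k + 1) (-1))}

/-- `Ψ^c_λ(P)`. -/
def psiC {α : Type} (lam : ℕ) (P : Set (PlainRule α)) : Set (PF (CAt α)) :=
  {φ | ∃ I a b, PlainRule.nxt I a b ∈ P ∧ ∃ k, k + 1 < lam ∧
    φ = PF.imp (.and (csigBody lam k b)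
          (PF.neg (.atom (.diff k (k + 1) (-(I.m : ℤ)))))) .fls} ∪
  {φ | ∃ I a b nn, PlainRule.nxt I a b ∈ P ∧ I.n = some nn ∧ ∃ k, k + 1 < lam ∧
    φ = PF.imp (.and (csigBody lam k b)
          (PF.neg (.atom (.diff (k + 1) k ((nn : ℤ) - 1))))) .fls}

open Classical in
-- The valuation `θ^c(M)` (one component of it, built from a trace component `S`).
noncomputable def thetaC {α : Type} (lam : ℕ) (τ : ℕ → ℕ) (S : ℕ → Set α) :
    Valu (CV α) :=
  fun x => match x with
    | .av a k => if k < lam ∧ a ∈ S k then some .tt else none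
    | .tv k => if k < lam then some (.num (τ k)) else none


section HereAndThere

variable {α χ κ : Type}

lemma csat_top (den : κ → Valu χ → Prop) (h t : Valu χ) : CSat den h t PF.top := by
  simp [PF.top, PF.neg, CSat]

lemma cModels_union {den : κ → Valu χ → Prop} {h t : Valu χ} {Γ Γ' : Set (PF κ)} :
    CModels den h t (Γ ∪ Γ') ↔ CModels den h t Γ ∧ CModels den h t Γ' := by
  simp only [CModels, Set.mem_union, or_imp, forall_and]

lemma csat_imp_and_neg_fls_iff {den : κ → Valu χ → Prop} {h t : Valu χ} {φ : PF κ} {c : κ}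
    (hc : den c h ↔ den c t) :
    CSat den h t (.imp (.and φ (PF.neg (.atom c))) .fls) ↔
      (CSat den h t φ → den c t) ∧ (CSat den t t φ → den c t) := by
  simp only [CSat, PF.neg, hc]
  tauto

lemma msat_top {lam : ℕ} {τ : ℕ → ℕ} {H T : ℕ → Set α} {k : ℕ} :
    MSat lam τ H T k MF.top := by
  simp [MF.top, MF.neg, MSat]

lemma msat_fin_iff {lam : ℕ} {τ : ℕ → ℕ} {H T : ℕ → Set α} {k : ℕ} :
    MSat lam τ H T k MF.fin ↔ ¬ k + 1 < lam := by
  simp [MF.fin, MF.top, MF.neg, MSat, fullInterval, Interval.mem]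

lemma msat_always_fullInterval_iff {lam : ℕ} {τ : ℕ → ℕ} {H T : ℕ → Set α} (φ : MF α) :
    MSat lam τ H T 0 (.always fullInterval φ) ↔ ∀ k, k < lam → MSat lam τ H T k φ := by
  simp [MSat, fullInterval, Interval.mem]

lemma csat_csigLit_iff {β : Type} {h t : Valu (CV α)} {lam : ℕ} {τ : ℕ → ℕ}
    {H T : ℕ → Set α} {k : ℕ} {f : β → PF (CAt α)} {g : β → MF α}
    (hf : ∀ x, CSat CAt.den h t (f x) ↔ MSat lam τ H T k (g x))
    (hf' : ∀ x, CSat CAt.den t t (f x) ↔ MSat lam τ T T k (g x)) (l : Lit β) :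
    CSat CAt.den h t (csigLit f l) ↔ MSat lam τ H T k (litMF g l) := by
  cases l with
  | pos x => exact hf x
  | neg x => simp only [csigLit, litMF, PF.neg, MF.neg, CSat, MSat, hf, hf']

end HereAndThere

structure Encodes {α : Type} (lam : ℕ) (τ : ℕ → ℕ) (h : Valu (CV α)) (H : ℕ → Set α) :
    Prop where
  bool_iff : ∀ a k, k < lam → (h (.av a k) = some .tt ↔ a ∈ H k)
  time_eq : ∀ k, k < lam → h (.tv k) = some (.num (τ k))

def lowerGapConstraint {α : Type} (lam k : ℕ) (b : List (Lit (BAt α))) (m : ℕ) : PF (CAt α) :=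
  .imp (.and (csigBody lam k b) (PF.neg (.atom (.diff k (k + 1) (-(m : ℤ)))))) .fls

def upperGapConstraint {α : Type} (lam k : ℕ) (b : List (Lit (BAt α))) (n : ℕ) : PF (CAt α) :=
  .imp (.and (csigBody lam k b) (PF.neg (.atom (.diff (k + 1) k ((n : ℤ) - 1))))) .fls

namespace Encodes

variable {α : Type} {lam : ℕ} {τ : ℕ → ℕ} {h t : Valu (CV α)} {H T : ℕ → Set α} {k : ℕ}

lemma den_diff_iff (e : Encodes lam τ h H) {i j : ℕ} (hi : i < lam) (hj : j < lam) (d : ℤ) :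
    CAt.den (.diff i j d) h ↔ (τ i : ℤ) - τ j ≤ d := by
  simp only [CAt.den, e.time_eq i hi, e.time_eq j hj, Option.some.injEq, DVal.num.injEq]
  constructor
  · rintro ⟨x, y, rfl, rfl, hxy⟩
    exact hxy
  · exact fun hd => ⟨_, _, rfl, rfl, hd⟩

lemma csat_csigBAt_iff (e : Encodes lam τ h H) (hk : k < lam) (b : BAt α) :
    CSat CAt.den h t (csigBAt lam k b) ↔ MSat lam τ H T k b.mf := by
  cases b with
  | atm a => exact e.bool_iff a k hk
  | init =>
    by_cases h0 : k = 0
    · rw [csigBAt, if_pos h0]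
      exact iff_of_true (csat_top _ _ _) h0
    · rw [csigBAt, if_neg h0]
      exact iff_of_false id h0
  | fin =>
    rw [BAt.mf, msat_fin_iff]
    by_cases hlast : k = lam - 1
    · rw [csigBAt, if_pos hlast]
      exact iff_of_true (csat_top _ _ _) (by omega)
    · rw [csigBAt, if_neg hlast]
      exact iff_of_false id (by omega)

lemma csat_csigBody_iff (e : Encodes lam τ h H) (e' : Encodes lam τ t T) (hk : k < lam)
    (b : List (Lit (BAt α))) :
    CSat CAt.den h t (csigBody lam k b) ↔ MSat lam τ H T k (bodyMF b) := by
  induction b with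
  | nil => exact iff_of_true (csat_top _ _ _) msat_top
  | cons l b ih =>
    simp only [csigBody, bodyMF, List.map_cons, List.foldr_cons, CSat, MSat] at ih ⊢
    rw [ih, csat_csigLit_iff (e.csat_csigBAt_iff hk) (e'.csat_csigBAt_iff hk)]

lemma csat_csigHead_iff (e : Encodes lam τ h H) (e' : Encodes lam τ t T) (hk : k < lam)
    (hd : List (Lit α)) :
    CSat CAt.den h t (csigHead k hd) ↔ MSat lam τ H T k (headMF hd) := by
  induction hd with
  | nil => simp [csigHead, headMF, CSat, MSat]
  | cons l hd ih =>
    simp only [csigHead, headMF, List.map_cons, List.foldr_cons, CSat, MSat] at ih ⊢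
    rw [ih, csat_csigLit_iff (f := fun a => .atom (.bool a k)) (g := MF.atom)
      (fun a => e.bool_iff a k hk) (fun a => e'.bool_iff a k hk)]

lemma csat_lowerGapConstraint_iff (e : Encodes lam τ h H) (e' : Encodes lam τ t T)
    (hτ : IsTiming lam τ) (hk : k + 1 < lam) (b : List (Lit (BAt α))) (m : ℕ) :
    CSat CAt.den h t (lowerGapConstraint lam k b m) ↔
      (MSat lam τ H T k (bodyMF b) → m ≤ τ (k + 1) - τ k) ∧
      (MSat lam τ T T k (bodyMF b) → m ≤ τ (k + 1) - τ k) := by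
  have hgap : (τ k : ℤ) - τ (k + 1) ≤ -(m : ℤ) ↔ m ≤ τ (k + 1) - τ k := by
    have := hτ.2 k hk
    omega
  rw [lowerGapConstraint, csat_imp_and_neg_fls_iff (by rw [e.den_diff_iff (by omega) hk,
    e'.den_diff_iff (by omega) hk]), e.csat_csigBody_iff e' (by omega),
    e'.csat_csigBody_iff e' (by omega), e'.den_diff_iff (by omega) hk, hgap]

lemma csat_upperGapConstraint_iff (e : Encodes lam τ h H) (e' : Encodes lam τ t T)
    (hτ : IsTiming lam τ) (hk : k + 1 < lam) (b : List (Lit (BAt α))) (n : ℕ) :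
    CSat CAt.den h t (upperGapConstraint lam k b n) ↔
      (MSat lam τ H T k (bodyMF b) → τ (k + 1) - τ k < n) ∧
      (MSat lam τ T T k (bodyMF b) → τ (k + 1) - τ k < n) := by
  have hgap : (τ (k + 1) : ℤ) - τ k ≤ (n : ℤ) - 1 ↔ τ (k + 1) - τ k < n := by
    have := hτ.2 k hk
    omega
  rw [upperGapConstraint, csat_imp_and_neg_fls_iff (by rw [e.den_diff_iff hk (by omega),
    e'.den_diff_iff hk (by omega)]), e.csat_csigBody_iff e' (by omega),
    e'.csat_csigBody_iff e' (by omega), e'.den_diff_iff hk (by omega), hgap]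

lemma csat_csigRule_nxt_iff (e : Encodes lam τ h H) (e' : Encodes lam τ t T) (hk : k < lam)
    (I : Interval) (a : α) (b : List (Lit (BAt α))) :
    CSat CAt.den h t (csigRule lam k (.nxt I a b)) ↔
      (MSat lam τ H T k (bodyMF b) → k + 1 < lam ∧ a ∈ H (k + 1)) ∧
      (MSat lam τ T T k (bodyMF b) → k + 1 < lam ∧ a ∈ T (k + 1)) := by
  simp only [csigRule, CSat, e.csat_csigBody_iff e' hk, e'.csat_csigBody_iff e' hk]
  by_cases hk1 : k + 1 < lam
  · rw [if_neg (by omega)]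
    simp only [CSat, CAt.den, e.bool_iff a _ hk1, e'.bool_iff a _ hk1, hk1, true_and]
  · rw [if_pos (by omega)]
    simp only [CSat, hk1, false_and]

end Encodes

/-- The formulas of `Π_λ(P) ∪ Ψ^c_λ(P)` contributed by the rule `r` at time point `k`. -/
def ruleConstraints {α : Type} (lam k : ℕ) : PlainRule α → Set (PF (CAt α))
  | .basic hd b => {csigRule lam k (.basic hd b)}
  | .nxt I a b => insert (csigRule lam k (.nxt I a b))
      {φ | k + 1 < lam ∧
        (φ = lowerGapConstraint lam k b I.m ∨ ∃ n ∈ I.n, φ = upperGapConstraint lam k b n)}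

section RuleConstraints

variable {α : Type} {lam : ℕ} {τ : ℕ → ℕ} {h t : Valu (CV α)} {H T : ℕ → Set α}

lemma cModels_ruleConstraints_nxt_iff (e : Encodes lam τ h H) (e' : Encodes lam τ t T)
    (hτ : IsTiming lam τ) {k : ℕ} (hk : k < lam) (I : Interval) (a : α)
    (b : List (Lit (BAt α))) :
    CModels CAt.den h t (ruleConstraints lam k (.nxt I a b)) ↔
      MSat lam τ H T k (.impl (bodyMF b) (.next I (.atom a))) := by
  rw [CModels, ruleConstraints, Set.forall_mem_insert, e.csat_csigRule_nxt_iff e' hk]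
  by_cases hk1 : k + 1 < lam
  · simp only [Set.mem_ofPred_eq, hk1, true_and, or_imp, forall_and, forall_eq,
      forall_exists_index, and_imp, forall_comm (α := PF (CAt α)),
      e.csat_lowerGapConstraint_iff e' hτ hk1, e.csat_upperGapConstraint_iff e' hτ hk1,
      MSat, Interval.mem]
    grind
  · simp [MSat, hk1]

lemma forall_cModels_ruleConstraints_iff (e : Encodes lam τ h H) (e' : Encodes lam τ t T)
    (hτ : IsTiming lam τ) (r : PlainRule α) :
    (∀ k, k < lam → CModels CAt.den h t (ruleConstraints lam k r)) ↔
      MSat lam τ H T 0 r.mf := by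
  cases r with
  | basic hd b =>
    rw [PlainRule.mf, msat_always_fullInterval_iff]
    refine forall₂_congr fun k hk => ?_
    simp only [CModels, ruleConstraints, Set.mem_singleton_iff, forall_eq, csigRule, CSat, MSat,
      e.csat_csigBody_iff e' hk, e'.csat_csigBody_iff e' hk, e.csat_csigHead_iff e' hk,
      e'.csat_csigHead_iff e' hk]
  | nxt I a b =>
    rw [PlainRule.mf, msat_always_fullInterval_iff]
    exact forall₂_congr fun k hk => cModels_ruleConstraints_nxt_iff e e' hτ hk I a b

lemma cModels_cPiTheory_union_psiC_iff {P : Set (PlainRule α)} :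
    CModels CAt.den h t (cPiTheory lam P ∪ psiC lam P) ↔
      ∀ r ∈ P, ∀ k, k < lam → CModels CAt.den h t (ruleConstraints lam k r) := by
  constructor
  · intro hM r hr k hk φ hφ
    apply hM
    cases r with
    | basic hd b => exact .inl ⟨_, hr, k, hk, hφ⟩
    | nxt I a b =>
      obtain rfl | ⟨hk1, rfl | ⟨n, hn, rfl⟩⟩ := hφ
      · exact .inl ⟨_, hr, k, hk, rfl⟩
      · exact .inr (.inl ⟨I, a, b, hr, k, hk1, rfl⟩)
      · exact .inr (.inr ⟨I, a, b, n, hr, hn, k, hk1, rfl⟩)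
  · rintro hR φ (⟨r, hr, k, hk, rfl⟩ | ⟨I, a, b, hr, k, hk1, rfl⟩ |
      ⟨I, a, b, n, hr, hn, k, hk1, rfl⟩)
    · cases r
      exacts [hR _ hr k hk _ rfl, hR _ hr k hk _ (Set.mem_insert _ _)]
    · exact hR _ hr k (by omega) _ (.inr ⟨hk1, .inl rfl⟩)
    · exact hR _ hr k (by omega) _ (.inr ⟨hk1, .inr ⟨n, hn, rfl⟩⟩)

lemma cModels_cPiTheory_union_psiC_iff_mhtModels (e : Encodes lam τ h H)
    (e' : Encodes lam τ t T) (hτ : IsTiming lam τ) (P : Set (PlainRule α)) :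
    CModels CAt.den h t (cPiTheory lam P ∪ psiC lam P) ↔
      MHTModels lam τ H T (PlainRule.mf '' P) := by
  rw [cModels_cPiTheory_union_psiC_iff, MHTModels, Set.forall_mem_image]
  exact forall₂_congr fun r _ => forall_cModels_ruleConstraints_iff e e' hτ r

end RuleConstraints

section Encoding

variable {α : Type} {lam : ℕ}

lemma exists_timing_of_cModels_deltaC {t : Valu (CV α)}
    (hΔ : CModels CAt.den t t (deltaC α lam)) :
    ∃ τ, IsTiming lam τ ∧ ∀ k, k < lam → t (.tv k) = some (.num (τ k)) := by
  have h0 : t (.tv 0) = some (.num 0) := hΔ _ (Set.mem_insert _ _)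
  have hstep : ∀ k, k + 1 < lam → ∃ x y : ℕ, t (.tv k) = some (.num x) ∧
      t (.tv (k + 1)) = some (.num y) ∧ (x : ℤ) - y ≤ -1 :=
    fun k hk => hΔ _ (.inr ⟨k, hk, rfl⟩)
  let τ : ℕ → ℕ := fun k => match t (.tv k) with
    | some (.num n) => n
    | _ => 0
  have hτ {k n : ℕ} (h : t (.tv k) = some (.num n)) : τ k = n := by simp [τ, h]
  refine ⟨τ, ⟨hτ h0, fun k hk => ?_⟩, ?_⟩
  · obtain ⟨x, y, hx, hy, hxy⟩ := hstep k hk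
    rw [hτ hx, hτ hy]
    omega
  · rintro (_ | k) hk
    · rwa [hτ h0]
    · obtain ⟨_, _, _, hy, _⟩ := hstep k hk
      rwa [hτ hy]

variable {τ : ℕ → ℕ} {h t : Valu (CV α)} {H T : ℕ → Set α}

lemma Encodes.cModels_deltaC (e : Encodes lam τ h H) (hτ : IsTiming lam τ) (hlam : 0 < lam) :
    CModels CAt.den h t (deltaC α lam) := by
  rintro φ (rfl | ⟨k, hk, rfl⟩)
  · show h (.tv 0) = some (.num 0)
    rw [e.time_eq 0 hlam, hτ.1]
  · have := hτ.2 k hk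
    exact (e.den_diff_iff (by omega) hk _).mpr (by omega)

lemma Encodes.ne (e : Encodes lam τ h H) (e' : Encodes lam τ t T) {k : ℕ} (hk : k < lam)
    (hne : H k ≠ T k) : h ≠ t := by
  rintro rfl
  exact hne (Set.ext fun a => (e.bool_iff a k hk).symm.trans (e'.bool_iff a k hk))

lemma encodes_thetaC : Encodes lam τ (thetaC lam τ H) H :=
  ⟨fun a k hk => by simp [thetaC, hk], fun k hk => by simp [thetaC, hk]⟩

lemma thetaC_le (e : Encodes lam τ t T) (hHT : IsTrace lam H T) :
    Valu.le (thetaC lam τ H) t := by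
  rintro (⟨a, k⟩ | k) d hd <;> simp only [thetaC] at hd <;> split_ifs at hd with hk
  · cases hd
    exact (e.bool_iff a k hk.1).mpr (hHT k hk.1 hk.2)
  · cases hd
    exact e.time_eq k hk

end Encoding

theorem stmt3 {α : Type} (lam : ℕ) (t : Valu (CV α)) (P : Set (PlainRule α))
    (hEq : CEqModel CAt.den t (cPiTheory lam P ∪ deltaC α lam ∪ psiC lam P)) :
    ∃ τ : ℕ → ℕ, IsTiming lam τ ∧
      (∀ k, k < lam → t (CV.tv k) = some (DVal.num (τ k))) ∧
      MetricEqModel lam τ (fun k => {a | t (CV.av a k) = some DVal.tt})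
        (PlainRule.mf '' P) := by
  obtain ⟨hModel, hMin⟩ := hEq
  rw [Set.union_right_comm] at hModel hMin
  obtain ⟨hRules, hΔ⟩ := cModels_union.mp hModel
  obtain ⟨τ, hτ, htv⟩ := exists_timing_of_cModels_deltaC hΔ
  have eT : Encodes lam τ t (fun k => {a | t (CV.av a k) = some DVal.tt}) :=
    ⟨fun _ _ _ => Iff.rfl, htv⟩
  refine ⟨τ, hτ, htv, (cModels_cPiTheory_union_psiC_iff_mhtModels eT eT hτ P).mp hRules, ?_⟩
  rintro H hHT ⟨k, hk, hne⟩ hH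
  have eH : Encodes lam τ (thetaC lam τ H) H := encodes_thetaC
  refine hMin _ (thetaC_le eT hHT) (eH.ne eT hk hne) (cModels_union.mpr ⟨?_, ?_⟩)
  · exact (cModels_cPiTheory_union_psiC_iff_mhtModels eH eT hτ P).mpr hH
  · exact eH.cModels_deltaC hτ (by omega)

end MetricASP
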